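/- Every extendible proposition A is IPC-prime: if IPC ⊢ A → (B ∨ C) then IPC ⊢ A → B or IPC ⊢ A → C. -/

import Mathlib

inductive Fm : Type
  | bot : Fm
  | atom : ℕ → Fm
  | and : Fm → Fm → Fm
  | or : Fm → Fm → Fm
  | imp : Fm → Fm → Fm
deriving DecidableEq

namespace Fm

def neg (A : Fm) : Fm := A.imp .bot
def top : Fm := Fm.bot.imp .bot
def iff (A B : Fm) : Fm := (A.imp B).and (B.imp A)

def subst (θ : ℕ → Fm) : Fm → Fm
  | bot => bot
  | atom n => θ n
  | and A B => (A.subst θ).and (B.subst θ)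
  | or A B => (A.subst θ).or (B.subst θ)
  | imp A B => (A.subst θ).imp (B.subst θ)

def atoms : Fm → Finset ℕ
  | bot => ∅
  | atom n => {n}
  | and A B => A.atoms ∪ B.atoms
  | or A B => A.atoms ∪ B.atoms
  | imp A B => A.atoms ∪ B.atoms

/-- maximal nesting of implications in the left/overall: `c→`. -/
def cimp : Fm → ℕ
  | bot => 0
  | atom _ => 0
  | and A B => max A.cimp B.cimp
  | or A B => max A.cimp B.cimp
  | imp A B => 1 + max A.cimp B.cimp

end Fm

def bigAndL (l : List Fm) : Fm := l.foldr Fm.and Fm.top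
def bigOrL (l : List Fm) : Fm := l.foldr Fm.or Fm.bot

/-- nonempty disjunction -/
def bigOrNE : Fm → List Fm → Fm
  | A, [] => A
  | A, B :: l => A.or (bigOrNE B l)

/-- Hilbert-style intuitionistic propositional calculus. -/
inductive IPC : Fm → Prop
  | imp_k (A B : Fm) : IPC (A.imp (B.imp A))
  | imp_s (A B C : Fm) : IPC ((A.imp (B.imp C)).imp ((A.imp B).imp (A.imp C)))
  | and_intro (A B : Fm) : IPC (A.imp (B.imp (A.and B)))
  | and_left (A B : Fm) : IPC ((A.and B).imp A)
  | and_right (A B : Fm) : IPC ((A.and B).imp B)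
  | or_inl (A B : Fm) : IPC (A.imp (A.or B))
  | or_inr (A B : Fm) : IPC (B.imp (A.or B))
  | or_elim (A B C : Fm) : IPC ((A.imp C).imp ((B.imp C).imp ((A.or B).imp C)))
  | exfalso (A : Fm) : IPC (Fm.bot.imp A)
  | mp {A B : Fm} : IPC (A.imp B) → IPC A → IPC B

/-- Γ-preservativity in the logic T : `A ⊳_{T,Γ} B`. -/
def Pres (T : Fm → Prop) (Γ : Set Fm) (A B : Fm) : Prop :=
  ∀ E ∈ Γ, T (E.imp A) → T (E.imp B)

/-- substitutions are identity on the parameters. -/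
def IdOnPar (par : Finset ℕ) (θ : ℕ → Fm) : Prop :=
  ∀ p ∈ par, θ p = Fm.atom p

/-- implication-free formulas. -/
inductive NI : Fm → Prop
  | bot : NI .bot
  | atom (n : ℕ) : NI (.atom n)
  | and {A B : Fm} : NI A → NI B → NI (A.and B)
  | or {A B : Fm} : NI A → NI B → NI (A.or B)

/-- No Nested Implications in the Left. -/
inductive NNIL : Fm → Prop
  | bot : NNIL .bot
  | atom (n : ℕ) : NNIL (.atom n)
  | and {A B : Fm} : NNIL A → NNIL B → NNIL (A.and B)
  | or {A B : Fm} : NNIL A → NNIL B → NNIL (A.or B)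
  | imp {A B : Fm} : NI A → NNIL B → NNIL (A.imp B)

def IPCPrime (A : Fm) : Prop :=
  ∀ B C, IPC (A.imp (B.or C)) → IPC (A.imp B) ∨ IPC (A.imp C)

/-- T-components: `⋀Γ ∧ ⋀Δ`, Γ atoms, Δ implications with atomic
antecedents not T-provable from Γ. -/
def IsComponentOver (T : Fm → Prop) (B : Fm) : Prop :=
  ∃ (as : List ℕ) (imps : List (ℕ × Fm)),
    B = (bigAndL (as.map Fm.atom)).and
          (bigAndL (imps.map fun p => (Fm.atom p.1).imp p.2)) ∧
    ∀ p ∈ imps, ¬ T ((bigAndL (as.map Fm.atom)).imp (Fm.atom p.1))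

structure KModel : Type 1 where
  W : Type
  le : W → W → Prop
  val : W → ℕ → Prop

namespace KModel

def force (K : KModel) : Fm → K.W → Prop
  | .bot, _ => False
  | .atom n, w => K.val w n
  | .and A B, w => K.force A w ∧ K.force B w
  | .or A B, w => K.force A w ∨ K.force B w
  | .imp A B, w => ∀ u, K.le w u → K.force A u → K.force B u

def IsIPC (K : KModel) : Prop :=
  (∀ w, K.le w w) ∧ (∀ {w u v}, K.le w u → K.le u v → K.le w v) ∧
  (∀ {w u}, K.le w u → K.le u w → w = u) ∧
  (∀ {w u} (a : ℕ), K.le w u → K.val w a → K.val u a)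

def Rooted (K : KModel) : Prop := ∃ r, ∀ w, K.le r w

def Tree (K : KModel) : Prop :=
  ∀ w, {u | K.le u w}.Finite ∧
    ∀ u v, K.le u w → K.le v w → K.le u v ∨ K.le v u

/-- finite rooted tree intuitionistic Kripke model. -/
def IsFRT (K : KModel) : Prop := K.IsIPC ∧ Finite K.W ∧ K.Rooted ∧ K.Tree

end KModel

/-- θ(K): same frame, valuation given by forcing of θ(a). -/
def substModel (θ : ℕ → Fm) (K : KModel) : KModel :=
  ⟨K.W, K.le, fun w a => K.force (θ a) w⟩

/-- disjoint sum of a family of models with a fresh root `none`,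
whose valuation at the root is `V0`. -/
def sumModel {ι : Type} (M : ι → KModel) (V0 : ℕ → Prop) : KModel where
  W := Option (Σ i, (M i).W)
  le := fun x y =>
    x = none ∨ ∃ i w u, x = some ⟨i, w⟩ ∧ y = some ⟨i, u⟩ ∧ (M i).le w u
  val := fun x a => match x with
    | none => V0 a
    | some ⟨i, w⟩ => (M i).val w a

/-- A is extendible: any finite family of (finite rooted tree) models of A
can be summed with a fresh root whose valuation (monotonely chosen)
can be arranged so that the sum is again a model of A. -/
def Extendible (A : Fm) : Prop :=
  ∀ (ι : Type), Finite ι → ∀ (M : ι → KModel),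
    (∀ i, (M i).IsFRT ∧ ∀ w, (M i).force A w) →
    ∃ V0 : ℕ → Prop, (∀ a, V0 a → ∀ i w, (M i).val w a) ∧
      ∀ w, (sumModel M V0).force A w

/-! If `A` proves neither `B` nor `C`, there are finite rooted tree models of `A` refuting `B`
and `C` respectively: the canonical model on the saturated subsets of the subformulas of
`A`, `B`, `C`, unravelled into the tree of its strictly increasing paths. Extendibility glues
the two into one model of `A` with a new root. By soundness that root forces `B ∨ C`, and
persistence carries the forced disjunct into the countermodel in which it fails. -/

namespace IPC

theorem imp_self (A : Fm) : IPC (A.imp A) :=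
  .mp (.mp (.imp_s A (A.imp A) A) (.imp_k A (A.imp A))) (.imp_k A A)

theorem weaken {A : Fm} (X : Fm) (h : IPC A) : IPC (X.imp A) :=
  .mp (.imp_k A X) h

theorem imp_mp {X A B : Fm} (hAB : IPC (X.imp (A.imp B))) (hA : IPC (X.imp A)) :
    IPC (X.imp B) :=
  .mp (.mp (.imp_s X A B) hAB) hA

theorem imp_trans {A B C : Fm} (hAB : IPC (A.imp B)) (hBC : IPC (B.imp C)) :
    IPC (A.imp C) :=
  imp_mp (weaken A hBC) hAB

theorem imp_imp_mp {Y X A B : Fm} (hAB : IPC (Y.imp (X.imp (A.imp B))))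
    (hA : IPC (Y.imp (X.imp A))) : IPC (Y.imp (X.imp B)) :=
  imp_mp (imp_mp (weaken Y (.imp_s X A B)) hAB) hA

theorem imp_comm {A X E : Fm} (h : IPC (A.imp (X.imp E))) : IPC (X.imp (A.imp E)) :=
  imp_imp_mp (weaken X h) (.imp_k X A)

theorem curry {A X E : Fm} (h : IPC ((A.and X).imp E)) : IPC (X.imp (A.imp E)) :=
  imp_comm (imp_imp_mp (weaken A (weaken X h)) (.and_intro A X))

theorem bigAndL_imp_of_mem {l : List Fm} {D : Fm} (h : D ∈ l) : IPC ((bigAndL l).imp D) := by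
  induction l with
  | nil => cases h
  | cons a t ih =>
    rcases List.mem_cons.1 h with rfl | h
    · exact .and_left _ _
    · exact imp_trans (.and_right _ _) (ih h)

theorem imp_bigAndL {l : List Fm} {X : Fm} (h : ∀ D ∈ l, IPC (X.imp D)) :
    IPC (X.imp (bigAndL l)) := by
  induction l with
  | nil => exact weaken X (imp_self .bot)
  | cons a t ih =>
    exact imp_mp (imp_mp (weaken X (.and_intro a (bigAndL t))) (h a (by simp)))
      (ih fun D hD => h D (by simp [hD]))

end IPC

noncomputable def finConj (Γ : Finset Fm) : Fm := bigAndL Γ.toList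

theorem IPC.imp_finConj {Γ : Finset Fm} {X : Fm} (h : ∀ D ∈ Γ, IPC (X.imp D)) :
    IPC (X.imp (finConj Γ)) :=
  imp_bigAndL (by simpa using h)

def Derives (Γ : Finset Fm) (D : Fm) : Prop := IPC ((finConj Γ).imp D)

namespace Derives

variable {Γ : Finset Fm} {D E F G : Fm}

theorem of_mem (h : D ∈ Γ) : Derives Γ D :=
  IPC.bigAndL_imp_of_mem (by simpa using h)

theorem of_IPC (h : IPC D) : Derives Γ D :=
  IPC.weaken _ h

theorem mp (hDE : Derives Γ (D.imp E)) (hD : Derives Γ D) : Derives Γ E :=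
  IPC.imp_mp hDE hD

theorem of_imp (hDE : IPC (D.imp E)) (hD : Derives Γ D) : Derives Γ E :=
  IPC.imp_trans hD hDE

theorem imp_of_insert (h : Derives (insert F Γ) E) : Derives Γ (F.imp E) := by
  classical
  refine IPC.curry (IPC.imp_trans (IPC.imp_finConj fun D hD => ?_) h)
  rcases Finset.mem_insert.1 hD with rfl | hD
  · exact .and_left _ _
  · exact IPC.imp_trans (.and_right _ _) (of_mem hD)

theorem of_or (hFG : Derives Γ (F.or G)) (hF : Derives (insert F Γ) E)
    (hG : Derives (insert G Γ) E) : Derives Γ E :=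
  mp (mp (mp (of_IPC (.or_elim F G E)) (imp_of_insert hF)) (imp_of_insert hG)) hFG

theorem imp_of_singleton (h : Derives {D} E) : IPC (D.imp E) :=
  IPC.imp_trans (IPC.imp_finConj fun _ hD => Finset.mem_singleton.1 hD ▸ IPC.imp_self D) h

end Derives

def Fm.subformulas : Fm → Finset Fm
  | .bot => {.bot}
  | .atom n => {.atom n}
  | .and A B => insert (A.and B) (A.subformulas ∪ B.subformulas)
  | .or A B => insert (A.or B) (A.subformulas ∪ B.subformulas)
  | .imp A B => insert (A.imp B) (A.subformulas ∪ B.subformulas)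

theorem Fm.mem_subformulas_self (A : Fm) : A ∈ A.subformulas := by
  cases A <;> simp [subformulas]

theorem Fm.subformulas_subset {A B : Fm} (h : B ∈ A.subformulas) :
    B.subformulas ⊆ A.subformulas := by
  induction A with
  | bot | atom => simp_all [subformulas]
  | and A₁ A₂ ih₁ ih₂ | or A₁ A₂ ih₁ ih₂ | imp A₁ A₂ ih₁ ih₂ =>
    simp only [subformulas, Finset.mem_insert, Finset.mem_union] at h
    rcases h with rfl | h | h
    · rfl
    · exact (ih₁ h).trans (by grind [subformulas])
    · exact (ih₂ h).trans (by grind [subformulas])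

def IsSubformulaClosed (S : Finset Fm) : Prop := ∀ D ∈ S, D.subformulas ⊆ S

theorem IsSubformulaClosed.union {S T : Finset Fm} (hS : IsSubformulaClosed S)
    (hT : IsSubformulaClosed T) : IsSubformulaClosed (S ∪ T) := by
  intro D hD
  rcases Finset.mem_union.1 hD with h | h
  · exact (hS D h).trans Finset.subset_union_left
  · exact (hT D h).trans Finset.subset_union_right

theorem isSubformulaClosed_subformulas (A : Fm) : IsSubformulaClosed A.subformulas :=
  fun _ => Fm.subformulas_subset

theorem IsSubformulaClosed.operands_mem {S : Finset Fm} (hS : IsSubformulaClosed S)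
    {D E F : Fm} (hF : F ∈ S) (hDE : F = D.and E ∨ F = D.or E ∨ F = D.imp E) : D ∈ S ∧ E ∈ S := by
  constructor <;>
  · refine hS F hF ?_
    rcases hDE with rfl | rfl | rfl <;> simp [Fm.subformulas, Fm.mem_subformulas_self]

section Saturated

variable {S : Finset Fm}

structure IsSaturated (S Γ : Finset Fm) : Prop where
  subset : Γ ⊆ S
  closed : ∀ D ∈ S, Derives Γ D → D ∈ Γ
  consistent : ¬ Derives Γ .bot
  prime : ∀ D E : Fm, D.or E ∈ Γ → D ∈ Γ ∨ E ∈ Γ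

theorem IsSaturated.of_maximal (hS : IsSubformulaClosed S) {Δ : Finset Fm} {E : Fm}
    (hΔS : Δ ⊆ S) (hΔE : ¬ Derives Δ E)
    (hmax : ∀ D ∈ S, D ∉ Δ → Derives (insert D Δ) E) : IsSaturated S Δ where
  subset := hΔS
  closed D hDS hD := by
    by_contra hDΔ
    exact hΔE (Derives.mp (Derives.imp_of_insert (hmax D hDS hDΔ)) hD)
  consistent h := hΔE (Derives.of_imp (.exfalso E) h)
  prime F G hFG := by
    have ⟨hF, hG⟩ := hS.operands_mem (hΔS hFG) (Or.inr (Or.inl rfl))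
    by_contra! hc
    exact hΔE (Derives.of_or (Derives.of_mem hFG) (hmax F hF hc.1) (hmax G hG hc.2))

theorem exists_isSaturated (hS : IsSubformulaClosed S) {Γ : Finset Fm} {E : Fm}
    (hΓS : Γ ⊆ S) (hΓE : ¬ Derives Γ E) :
    ∃ Δ, IsSaturated S Δ ∧ Γ ⊆ Δ ∧ ¬ Derives Δ E := by
  classical
  let cand := S.powerset.filter fun Δ => Γ ⊆ Δ ∧ ¬ Derives Δ E
  have hΓ : Γ ∈ cand := by simp [cand, hΓS, hΓE]
  obtain ⟨Δ, hΔ, hmax⟩ := Finset.exists_maximal (s := cand) ⟨Γ, hΓ⟩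
  simp only [cand, Finset.mem_filter, Finset.mem_powerset] at hΔ hmax
  obtain ⟨hΔS, hΓΔ, hΔE⟩ := hΔ
  refine ⟨Δ, IsSaturated.of_maximal hS hΔS hΔE fun D hDS hDΔ => ?_, hΓΔ, hΔE⟩
  by_contra hD
  exact hDΔ (hmax ⟨Finset.insert_subset hDS hΔS, hΓΔ.trans (Finset.subset_insert _ _), hD⟩
    (Finset.subset_insert _ _) (Finset.mem_insert_self _ _))

end Saturated

def canonicalModel (S : Finset Fm) : KModel where
  W := {Γ : Finset Fm // IsSaturated S Γ}
  le Γ Δ := Γ.1 ⊆ Δ.1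
  val Γ n := Fm.atom n ∈ Γ.1

namespace canonicalModel

variable (S : Finset Fm)

theorem isIPC : (canonicalModel S).IsIPC :=
  ⟨fun _ => subset_rfl, fun h₁ h₂ => h₁.trans h₂, fun h₁ h₂ => Subtype.ext (h₁.antisymm h₂),
    fun _ h hn => h hn⟩

instance finite : Finite (canonicalModel S).W :=
  Finite.of_injective (β := S.powerset) (fun Γ => ⟨Γ.1, Finset.mem_powerset.2 Γ.2.subset⟩)
    fun (_ _ : {Γ // IsSaturated S Γ}) h => Subtype.ext (by simpa using h)

variable {S}

theorem exists_le_of_not_mem_imp (hS : IsSubformulaClosed S) (Γ : (canonicalModel S).W)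
    {D E : Fm} (hDE : D.imp E ∈ S) (hΓ : D.imp E ∉ Γ.1) :
    ∃ Δ : (canonicalModel S).W, (canonicalModel S).le Γ Δ ∧ D ∈ Δ.1 ∧ E ∉ Δ.1 := by
  classical
  have hD := (hS.operands_mem hDE (Or.inr (Or.inr rfl))).1
  have hΓE : ¬ Derives (insert D Γ.1) E := fun h =>
    hΓ (Γ.2.closed _ hDE (Derives.imp_of_insert h))
  obtain ⟨Δ, hΔ, hsub, hΔE⟩ := exists_isSaturated hS (Finset.insert_subset hD Γ.2.subset) hΓE
  exact ⟨⟨Δ, hΔ⟩, (Finset.subset_insert _ _).trans hsub, hsub (Finset.mem_insert_self _ _),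
    fun h => hΔE (Derives.of_mem h)⟩

theorem force_iff_mem (hS : IsSubformulaClosed S) {D : Fm} (hD : D ∈ S)
    (Γ : (canonicalModel S).W) : (canonicalModel S).force D Γ ↔ D ∈ Γ.1 := by
  induction D generalizing Γ with
  | bot => exact ⟨False.elim, fun h => Γ.2.consistent (Derives.of_mem h)⟩
  | atom n => exact Iff.rfl
  | and D E ihD ihE =>
    obtain ⟨hD, hE⟩ := hS.operands_mem hD (Or.inl rfl)
    rw [KModel.force, ihD hD, ihE hE]
    refine ⟨fun h => Γ.2.closed _ ‹_› ?_, fun h => ⟨Γ.2.closed _ hD ?_, Γ.2.closed _ hE ?_⟩⟩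
    · exact Derives.mp (Derives.mp (Derives.of_IPC (.and_intro D E))
        (Derives.of_mem h.1)) (Derives.of_mem h.2)
    · exact Derives.of_imp (.and_left D E) (Derives.of_mem h)
    · exact Derives.of_imp (.and_right D E) (Derives.of_mem h)
  | or D E ihD ihE =>
    obtain ⟨hD, hE⟩ := hS.operands_mem hD (Or.inr (Or.inl rfl))
    rw [KModel.force, ihD hD, ihE hE]
    refine ⟨fun h => Γ.2.closed _ ‹_› ?_, Γ.2.prime D E⟩
    rcases h with h | h
    · exact Derives.of_imp (.or_inl D E) (Derives.of_mem h)
    · exact Derives.of_imp (.or_inr D E) (Derives.of_mem h)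
  | imp D E ihD ihE =>
    obtain ⟨hD, hE⟩ := hS.operands_mem hD (Or.inr (Or.inr rfl))
    refine ⟨fun h => ?_, fun h Δ hle hDΔ => ?_⟩
    · by_contra hΓ
      obtain ⟨Δ, hle, hDΔ, hEΔ⟩ := exists_le_of_not_mem_imp hS Γ ‹_› hΓ
      exact hEΔ ((ihE hE Δ).1 (h Δ hle ((ihD hD Δ).2 hDΔ)))
    · exact (ihE hE Δ).2 (Δ.2.closed _ hE
        (Derives.mp (Derives.of_mem (hle h)) (Derives.of_mem ((ihD hD Δ).1 hDΔ))))

end canonicalModel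

namespace KModel

variable {K : KModel}

theorem force_mono (hK : K.IsIPC) {w u : K.W} (hle : K.le w u) {D : Fm} (h : K.force D w) :
    K.force D u := by
  induction D generalizing w u with
  | bot => exact h
  | atom n => exact hK.2.2.2 n hle h
  | and D E ihD ihE => exact ⟨ihD hle h.1, ihE hle h.2⟩
  | or D E ihD ihE => exact h.imp (ihD hle) (ihE hle)
  | imp D E => exact fun v hv => h v (hK.2.1 hle hv)

theorem force_of_IPC (hK : K.IsIPC) {D : Fm} (h : IPC D) (w : K.W) : K.force D w := by
  have ⟨hrefl, htrans, _, _⟩ := hK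
  induction h generalizing w with
  | imp_k => exact fun u _ hA v hv _ => force_mono hK hv hA
  | imp_s => exact fun u _ h₁ v hv h₂ x hx hA => h₁ x (htrans hv hx) hA x (hrefl x) (h₂ x hx hA)
  | and_intro => exact fun u _ hA v hv hB => ⟨force_mono hK hv hA, hB⟩
  | and_left => exact fun _ _ h => h.1
  | and_right => exact fun _ _ h => h.2
  | or_inl => exact fun _ _ => Or.inl
  | or_inr => exact fun _ _ => Or.inr
  | or_elim =>
    exact fun u _ h₁ v hv h₂ x hx h₃ => h₃.elim (h₁ x (htrans hv hx)) (h₂ x hx)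
  | exfalso => exact fun _ _ => False.elim
  | mp _ _ ihAB ihA => exact ihAB w w (hrefl w) (ihA w)

def Lt (K : KModel) (w u : K.W) : Prop := K.le w u ∧ w ≠ u

/-- A path `r < w₁ < ⋯ < wₙ` from `r`, stored as `[w₁, …, wₙ]`. -/
def Path (K : KModel) (r : K.W) : Type := {t : List K.W // (r :: t).IsChain K.Lt}

variable {r : K.W}

def Path.last (t : K.Path r) : K.W := (r :: t.1).getLast (List.cons_ne_nil _ _)

def unravel (K : KModel) (r : K.W) : KModel where
  W := K.Path r
  le t t' := t.1 <+: t'.1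
  val t := K.val t.last

namespace Path

def nil : K.Path r := ⟨[], List.isChain_singleton r⟩

def snoc (t : K.Path r) (u : K.W) (h : K.Lt t.last u) : K.Path r :=
  ⟨t.1 ++ [u], by
    rw [← List.cons_append]
    refine t.2.append (List.isChain_singleton u) fun x hx y hy => ?_
    simp only [List.getLast?_eq_some_getLast (List.cons_ne_nil _ _), Option.mem_def,
      Option.some.injEq, List.head?_cons] at hx hy
    exact hx ▸ hy ▸ h⟩

theorem last_snoc (t : K.Path r) (u : K.W) (h : K.Lt t.last u) : (t.snoc u h).last = u := by
  simp [last, snoc]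

theorem le_last_of_mem (hK : K.IsIPC) (t : K.Path r) : ∀ w ∈ r :: t.1, K.le w t.last :=
  t.2.backwards_induction _ _ (fun _ _ hxy hy => hK.2.1 hxy.1 hy) fun _ => hK.1 _

theorem last_mono (hK : K.IsIPC) {t t' : K.Path r} (h : t.1 <+: t'.1) : K.le t.last t'.last :=
  le_last_of_mem hK t' _ (List.cons_prefix_cons.2 ⟨rfl, h⟩ |>.subset (List.getLast_mem _))

theorem nodup (hK : K.IsIPC) (t : K.Path r) : t.1.Nodup := by
  have : Trans K.Lt K.Lt K.Lt := ⟨fun h₁ h₂ => ⟨hK.2.1 h₁.1 h₂.1,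
    fun he => h₁.2 (hK.2.2.1 h₁.1 (he ▸ h₂.1))⟩⟩
  exact ((List.isChain_iff_pairwise.1 t.2).imp fun h => h.2).sublist (List.sublist_cons_self _ _)

end Path

theorem force_unravel (hK : K.IsIPC) (D : Fm) (t : K.Path r) :
    (K.unravel r).force D t ↔ K.force D t.last := by
  induction D generalizing t with
  | bot | atom => exact Iff.rfl
  | and D E ihD ihE => exact and_congr (ihD t) (ihE t)
  | or D E ihD ihE => exact or_congr (ihD t) (ihE t)
  | imp D E ihD ihE =>
    refine ⟨fun h u hu hD => ?_, fun h t' ht hD => ?_⟩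
    · by_cases hu' : t.last = u
      · subst hu'
        exact (ihE t).1 (h t (List.prefix_refl _) ((ihD t).2 hD))
      · have hlast := t.last_snoc u ⟨hu, hu'⟩
        have := h (t.snoc u ⟨hu, hu'⟩) (List.prefix_append _ _) ((ihD _).2 (by rwa [hlast]))
        rwa [← hlast, ← ihE]
    · exact (ihE t').2 (h _ (Path.last_mono hK ht) ((ihD t').1 hD))

theorem unravel_isFRT (hK : K.IsIPC) [Finite K.W] : (K.unravel r).IsFRT := by
  have := Fintype.ofFinite K.W
  have : Finite (K.unravel r).W :=
    Finite.of_injective (β := {l : List K.W // l.Nodup}) (fun t => ⟨t.1, t.nodup hK⟩)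
      fun (_ _ : {t // _}) h => Subtype.ext (by simpa using h)
  refine ⟨⟨fun _ => List.prefix_refl _, fun h₁ h₂ => h₁.trans h₂, fun h₁ h₂ => ?_,
    fun _ h hv => hK.2.2.2 _ (Path.last_mono hK h) hv⟩, this, ⟨Path.nil, fun t => List.nil_prefix⟩,
    fun w => ⟨Set.toFinite _, fun u v hu hv => ?_⟩⟩
  · exact Subtype.ext (h₁.eq_of_length (h₁.length_le.antisymm h₂.length_le))
  · rcases le_total u.1.length v.1.length with h | h
    · exact Or.inl (List.prefix_of_prefix_length_le hu hv h)
    · exact Or.inr (List.prefix_of_prefix_length_le hv hu h)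

end KModel

section sumModel

variable {ι : Type} (M : ι → KModel) (V0 : ℕ → Prop)

theorem sumModel_force_some (D : Fm) (i : ι) (w : (M i).W) :
    (sumModel M V0).force D (some ⟨i, w⟩) ↔ (M i).force D w := by
  induction D generalizing w with
  | bot | atom => exact Iff.rfl
  | and D E ihD ihE => exact and_congr (ihD w) (ihE w)
  | or D E ihD ihE => exact or_congr (ihD w) (ihE w)
  | imp D E ihD ihE =>
    refine ⟨fun h u hu hD => (ihE u).1 (h _ (Or.inr ⟨i, w, u, rfl, rfl, hu⟩) ((ihD u).2 hD)), ?_⟩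
    rintro h _ (hx | ⟨j, a, u, hx, rfl, hu⟩) hD
    · cases hx
    · cases hx
      exact (ihE u).2 (h u hu ((ihD u).1 hD))

variable {M V0}

theorem sumModel_isIPC (hM : ∀ i, (M i).IsIPC) (hV0 : ∀ a, V0 a → ∀ i w, (M i).val w a) :
    (sumModel M V0).IsIPC := by
  refine ⟨?_, ?_, ?_, ?_⟩
  · rintro (_ | ⟨i, w⟩)
    · exact Or.inl rfl
    · exact Or.inr ⟨i, w, w, rfl, rfl, (hM i).1 w⟩
  · rintro x y z (rfl | ⟨i, w, u, rfl, rfl, hwu⟩) (hy | ⟨j, u', v, hu, rfl, huv⟩)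
    · exact Or.inl rfl
    · exact Or.inl rfl
    · cases hy
    · cases hu
      exact Or.inr ⟨i, w, v, rfl, rfl, (hM i).2.1 hwu huv⟩
  · rintro x y (rfl | ⟨i, w, u, rfl, rfl, hwu⟩) (hy | ⟨j, u', v, hu, hv, huv⟩)
    · exact hy.symm
    · cases hv
    · cases hy
    · cases hu; cases hv
      rw [(hM i).2.2.1 hwu huv]
  · rintro x y a (rfl | ⟨i, w, u, rfl, rfl, hwu⟩) hv
    · rcases y with _ | ⟨i, w⟩
      · exact hv
      · exact hV0 a hv i w
    · exact (hM i).2.2.2 a hwu hv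

theorem sumModel_force_of_force_none (hM : ∀ i, (M i).IsIPC)
    (hV0 : ∀ a, V0 a → ∀ i w, (M i).val w a) {D : Fm} (h : (sumModel M V0).force D none)
    (i : ι) (w : (M i).W) : (M i).force D w :=
  (sumModel_force_some M V0 D i w).1 (KModel.force_mono (sumModel_isIPC hM hV0) (Or.inl rfl) h)

end sumModel

theorem exists_isFRT_countermodel {A X : Fm} (h : ¬ IPC (A.imp X)) :
    ∃ K : KModel, K.IsFRT ∧ (∀ w, K.force A w) ∧ ∃ w, ¬ K.force X w := by
  let S := A.subformulas ∪ X.subformulas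
  have hS : IsSubformulaClosed S :=
    (isSubformulaClosed_subformulas A).union (isSubformulaClosed_subformulas X)
  have hAS : A ∈ S := Finset.mem_union_left _ A.mem_subformulas_self
  have hXS : X ∈ S := Finset.mem_union_right _ X.mem_subformulas_self
  obtain ⟨Δ, hΔ, hAΔ, hΔX⟩ := exists_isSaturated hS (Finset.singleton_subset_iff.2 hAS)
    fun hX => h hX.imp_of_singleton
  have hK := canonicalModel.isIPC S
  refine ⟨(canonicalModel S).unravel ⟨Δ, hΔ⟩, KModel.unravel_isFRT hK, fun t => ?_,
    KModel.Path.nil, ?_⟩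
  · refine (KModel.force_unravel hK A t).2 ((canonicalModel.force_iff_mem hS hAS _).2 ?_)
    exact KModel.Path.last_mono hK (t := .nil) List.nil_prefix (hAΔ (Finset.mem_singleton_self A))
  · exact fun hX => hΔX (Derives.of_mem
      ((canonicalModel.force_iff_mem hS hXS _).1 ((KModel.force_unravel hK X _).1 hX)))

theorem stmt_13 (A : Fm) (hA : Extendible A) (B C : Fm)
    (h : IPC (A.imp (B.or C))) : IPC (A.imp B) ∨ IPC (A.imp C) := by
  by_contra! hc
  obtain ⟨KB, hKB, hAB, wB, hwB⟩ := exists_isFRT_countermodel hc.1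
  obtain ⟨KC, hKC, hAC, wC, hwC⟩ := exists_isFRT_countermodel hc.2
  let M : Bool → KModel := fun b => cond b KB KC
  have hM : ∀ b, (M b).IsFRT ∧ ∀ w, (M b).force A w :=
    Bool.forall_bool.2 ⟨⟨hKC, hAC⟩, ⟨hKB, hAB⟩⟩
  obtain ⟨V0, hV0, hsumA⟩ := hA Bool inferInstance M hM
  have hMIPC b := (hM b).1.1
  have hBC := KModel.force_of_IPC (sumModel_isIPC hMIPC hV0) h none none (Or.inl rfl) (hsumA none)
  rcases hBC with hB | hC
  · exact hwB (sumModel_force_of_force_none hMIPC hV0 hB true wB)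
  · exact hwC (sumModel_force_of_force_none hMIPC hV0 hC false wC)
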